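/- arXiv:1810.12720 — 4 statements merged into one kernel-verified Lean document; each statement's English description precedes it below -/
import Mathlib

section
/- Let A be an n×n Hermitian complex matrix and U = R(i,j,φ,α) a complex plane rotation equal to the identity except in rows/columns i < j where its 2×2 pivot submatrix is [[cos φ, -e^{iα} sin φ],[e^{-iα} sin φ, cos φ]]. Set A' = U* A U. If the off-diagonal pivot entries of A' vanish (a'_{ij} = a'_{ji} = 0) and a_{ij} ≠ 0, then e^{2iα} = a_{ij}/conj(a_{ij}), i.e., α = arg(a_{ij}) up to a multiple of π. -/
open Matrix

/-- The complex plane rotation `R(i,j,φ,α)`: identity except in rows/columns `i,j`,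
where the 2×2 pivot block is `[[cos φ, -e^{iα} sin φ], [e^{-iα} sin φ, cos φ]]`. -/
noncomputable def planeRot (n : ℕ) (i j : Fin n) (φ α : ℝ) : Matrix (Fin n) (Fin n) ℂ :=
  fun r t =>
    if r = i ∧ t = i then (Real.cos φ : ℂ)
    else if r = i ∧ t = j then -Complex.exp (α * Complex.I) * Real.sin φ
    else if r = j ∧ t = i then Complex.exp (-α * Complex.I) * Real.sin φ
    else if r = j ∧ t = j then (Real.cos φ : ℂ)
    else if r = t then 1 else 0

theorem stmt_3 (n : ℕ) (A : Matrix (Fin n) (Fin n) ℂ) (hA : A.IsHermitian)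
    (i j : Fin n) (hij : i < j) (φ α : ℝ)
    (A' : Matrix (Fin n) (Fin n) ℂ)
    (hA' : A' = (planeRot n i j φ α)ᴴ * A * planeRot n i j φ α)
    (hzero : A' i j = 0 ∧ A' j i = 0) (hne : A i j ≠ 0) :
    Complex.exp (2 * α * Complex.I) = A i j / (starRingEnd ℂ (A i j)) := by
  set U := planeRot n i j φ α with hU
  have hne' : i ≠ j := hij.ne
  have hne'' : j ≠ i := hij.ne'
  -- entries of U
  have hUii : U i i = (Real.cos φ : ℂ) := by simp [hU, planeRot]
  have hUij : U i j = -Complex.exp (α * Complex.I) * Real.sin φ := by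
    simp [hU, planeRot, hne'']
  have hUji : U j i = Complex.exp (-α * Complex.I) * Real.sin φ := by
    simp [hU, planeRot, hne'']
  have hUjj : U j j = (Real.cos φ : ℂ) := by simp [hU, planeRot, hne'']
  -- off-pivot column entries vanish
  have hUcol : ∀ r t : Fin n, r ≠ i → r ≠ j → (t = i ∨ t = j) → U r t = 0 := by
    intro r t h1 h2 ht
    have h3 : r ≠ t := by rcases ht with rfl | rfl <;> assumption
    simp [hU, planeRot, h1, h2, h3]
  have hsum : ∀ f : Fin n → ℂ, (∀ r, r ≠ i → r ≠ j → f r = 0) →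
      ∑ r, f r = f i + f j := by
    intro f hf
    exact Finset.sum_eq_add i j hne'
      (fun c _ hc => hf c hc.1 hc.2)
      (fun h => absurd (Finset.mem_univ i) h)
      (fun h => absurd (Finset.mem_univ j) h)
  -- expand A' p q for p, q ∈ {i, j}
  have expand : ∀ p q : Fin n, (p = i ∨ p = j) → (q = i ∨ q = j) →
      A' p q = (starRingEnd ℂ (U i p) * A i i + starRingEnd ℂ (U j p) * A j i) * U i q
        + (starRingEnd ℂ (U i p) * A i j + starRingEnd ℂ (U j p) * A j j) * U j q := by
    intro p q hp hq
    rw [hA', Matrix.mul_apply]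
    rw [hsum _ (fun t h1 h2 => by
      rw [show U t q = 0 from hUcol t q h1 h2 hq, mul_zero])]
    have inner : ∀ t : Fin n, (Uᴴ * A) p t
        = starRingEnd ℂ (U i p) * A i t + starRingEnd ℂ (U j p) * A j t := by
      intro t
      rw [Matrix.mul_apply]
      rw [hsum _ (fun r hr1 hr2 => by
        rw [Matrix.conjTranspose_apply, hUcol r p hr1 hr2 hp, star_zero, zero_mul])]
      rw [Matrix.conjTranspose_apply, Matrix.conjTranspose_apply]
      rfl
    rw [inner i, inner j]
  have h1 : A' i j = 0 := hzero.1
  have h2 : A' j i = 0 := hzero.2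
  rw [expand i j (Or.inl rfl) (Or.inr rfl)] at h1
  rw [expand j i (Or.inr rfl) (Or.inl rfl)] at h2
  rw [hUii, hUij, hUji, hUjj] at h1 h2
  set a := A i j with ha
  have hb : A j i = starRingEnd ℂ a := by
    simpa using (hA.apply j i).symm
  rw [hb] at h1 h2
  have hce : starRingEnd ℂ (Complex.exp (α * Complex.I)) = Complex.exp (-α * Complex.I) := by
    rw [← Complex.exp_conj]
    congr 1
    simp [Complex.conj_I]
  have hce' : starRingEnd ℂ (Complex.exp (-α * Complex.I)) = Complex.exp (α * Complex.I) := by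
    rw [← Complex.exp_conj]
    congr 1
    simp [Complex.conj_I]
  simp only [_root_.map_mul, map_neg, hce, hce', Complex.conj_ofReal] at h1 h2
  have hexp : Complex.exp (α * Complex.I) * Complex.exp (-α * Complex.I) = 1 := by
    rw [← Complex.exp_add]
    ring_nf
    exact Complex.exp_zero
  have hcs : (Real.cos φ : ℂ) ^ 2 + (Real.sin φ : ℂ) ^ 2 = 1 := by
    norm_cast
    exact Real.cos_sq_add_sin_sq φ
  have htwo : Complex.exp (2 * α * Complex.I) = Complex.exp (α * Complex.I) ^ 2 := by
    rw [sq, ← Complex.exp_add]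
    ring_nf
  have hca : starRingEnd ℂ a ≠ 0 := by simpa using hne
  rw [htwo, eq_div_iff hca]
  set e := Complex.exp (α * Complex.I)
  set f := Complex.exp (-α * Complex.I)
  set c := (Real.cos φ : ℂ)
  set s := (Real.sin φ : ℂ)
  set b := starRingEnd ℂ a
  linear_combination (-1 : ℂ) * h1 + e ^ 2 * h2
    + (s ^ 2 * a * (e * f + 1) - c * s * e * (A j j - A i i)) * hexp
    + (a - e ^ 2 * b) * hcs
end

section
/- Let A be Hermitian and B Hermitian positive definite, both n×n complex matrices, and let μ = max{|λ| : λ eigenvalue of the pencil (A,B), i.e., det(A - λB) = 0}. Then ‖A‖_2 ≤ μ‖B‖_2. -/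
open Matrix
open scoped ComplexOrder

/-- The spectral norm of a complex matrix (operator norm on Euclidean space). -/
noncomputable def specNorm {n : ℕ} (B : Matrix (Fin n) (Fin n) ℂ) : ℝ :=
  ‖Matrix.toEuclideanCLM (𝕜 := ℂ) B‖

/-!
Write `B = S * S` with `S = √B` a self-adjoint unit, and set `C = S⁻¹ A S⁻¹`, which is again
self-adjoint. Since `A - λ B = S (C - λ) S`, every point of the spectrum of `C` is an eigenvalue
of the pencil, so `‖C‖`, which is the spectral radius of `C`, is at most `μ`. The C⋆-identity
`‖S‖² = ‖S * S‖` then gives `‖A‖ = ‖S C S‖ ≤ ‖C‖ ‖B‖ ≤ μ ‖B‖`.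
-/

section

variable {A : Type*} [CStarAlgebra A]

theorem IsSelfAdjoint.norm_le_of_forall_mem_spectrum [Nontrivial A] {a : A}
    (ha : IsSelfAdjoint a) {r : ℝ} (hr : ∀ z ∈ spectrum ℂ a, ‖z‖ ≤ r) : ‖a‖ ≤ r := by
  obtain ⟨z, hz⟩ := spectrum.nonempty (A := A) a
  have hr₀ : 0 ≤ r := (norm_nonneg z).trans (hr z hz)
  have hρ : spectralRadius ℂ a ≤ ENNReal.ofReal r :=
    iSup₂_le fun z hz ↦ by
      rw [← enorm_eq_nnnorm, ← ofReal_norm]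
      exact ENNReal.ofReal_le_ofReal (hr z hz)
  rwa [ha.spectralRadius_eq_nnnorm, ← ENNReal.ofReal_coe_nnreal,
    ENNReal.ofReal_le_ofReal_iff hr₀] at hρ

theorem IsSelfAdjoint.norm_le_mul_norm_star_mul_self {a : A} (ha : IsSelfAdjoint a) (u : Aˣ)
    {μ : ℝ} (hμ : ∀ z : ℂ, ¬ IsUnit (a - z • (star (u : A) * u)) → ‖z‖ ≤ μ) :
    ‖a‖ ≤ μ * ‖star (u : A) * u‖ := by
  nontriviality A
  set c := star (↑u⁻¹ : A) * a * ↑u⁻¹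
  have hac : a = star (u : A) * c * u := by
    have h : star (u : A) * c * u = star ((↑u⁻¹ : A) * u) * a * (↑u⁻¹ * u) := by
      simp only [c, star_mul, mul_assoc]
    simp [h]
  have hc : ‖c‖ ≤ μ := by
    refine (ha.conjugate' _).norm_le_of_forall_mem_spectrum fun z hz ↦ hμ z fun h ↦ hz ?_
    have : a - z • (star (u : A) * u) = star (u : A) * (c - algebraMap ℂ A z) * u := by
      rw [hac, Algebra.algebraMap_eq_smul_one]; noncomm_ring
    rw [this, ← Units.coe_star, Units.isUnit_mul_units, Units.isUnit_units_mul] at h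
    rwa [spectrum.mem_resolventSet_iff, ← IsUnit.neg_iff, neg_sub]
  calc ‖a‖ ≤ ‖star (u : A)‖ * ‖c‖ * ‖(u : A)‖ := hac ▸ norm_mul₃_le
    _ = ‖c‖ * ‖star (u : A) * u‖ := by rw [CStarRing.norm_star_mul_self, norm_star]; ring
    _ ≤ μ * ‖star (u : A) * u‖ := by gcongr

theorem IsSelfAdjoint.norm_le_mul_norm_of_isStrictlyPositive [PartialOrder A] [StarOrderedRing A]
    {a b : A} (ha : IsSelfAdjoint a) (hb : IsStrictlyPositive b) {μ : ℝ}
    (hμ : ∀ z : ℂ, ¬ IsUnit (a - z • b) → ‖z‖ ≤ μ) : ‖a‖ ≤ μ * ‖b‖ := by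
  obtain ⟨s, ⟨u, rfl⟩, hs, rfl⟩ :=
    CStarAlgebra.isStrictlyPositive_iff_exists_isUnit_and_isSelfAdjoint_and_eq_mul_self.mp hb
  rw [show (u : A) * u = star (u : A) * u by rw [hs.star_eq]] at hμ ⊢
  exact ha.norm_le_mul_norm_star_mul_self u hμ

end

theorem stmt_7 (n : ℕ) (A B : Matrix (Fin n) (Fin n) ℂ)
    (hA : A.IsHermitian) (hB : B.PosDef) (μ : ℝ)
    (hμ : ∀ lam : ℂ, (A - lam • B).det = 0 → ‖lam‖ ≤ μ) :
    specNorm A ≤ μ * specNorm B := by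
  -- `specNorm` is by definition the norm of the C⋆-algebra structure on matrices opened here.
  open scoped Matrix.Norms.L2Operator MatrixOrder in
  exact hA.isSelfAdjoint.norm_le_mul_norm_of_isStrictlyPositive hB.isStrictlyPositive
    fun z hz ↦ hμ z (by rwa [isUnit_iff_isUnit_det, isUnit_iff_ne_zero, not_not] at hz)
end

section
/- Let b ∈ ℂ with |b| ≤ √2/4, β = sqrt(1 - |b|^2), and let Ĉ be either (1/β)[[β, -b],[0,1]] or (1/β)[[1,0],[-conj(b), β]]. Then ‖Ĉ - I_2‖_F^2 = (1/β - 1)^2 + |b|^2/β^2, and consequently ‖Ĉ - I_2‖_F ≤ 1.1·|b|. -/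
open Matrix

/-- Squared Frobenius norm of a 2×2 complex matrix. -/
noncomputable def frobSq (M : Matrix (Fin 2) (Fin 2) ℂ) : ℝ :=
  ∑ i : Fin 2, ∑ j : Fin 2, ‖M i j‖ ^ 2

lemma frobSq_eq_entries (M : Matrix (Fin 2) (Fin 2) ℂ) :
    frobSq M = ‖M 0 0‖ ^ 2 + ‖M 0 1‖ ^ 2 + ‖M 1 0‖ ^ 2 + ‖M 1 1‖ ^ 2 := by
  simp only [frobSq, Fin.sum_univ_two]
  ring

lemma norm_ofReal_inv_sub_one_sq (β : ℝ) : ‖(β : ℂ)⁻¹ - 1‖ ^ 2 = (1 / β - 1) ^ 2 := by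
  have h : (β : ℂ)⁻¹ - 1 = ((β⁻¹ - 1 : ℝ) : ℂ) := by push_cast; rfl
  rw [h, Complex.norm_real, Real.norm_eq_abs, sq_abs, one_div]

lemma frobSq_upper_sub_one {β : ℝ} (hβ : β ≠ 0) (b : ℂ) :
    frobSq ((β : ℂ)⁻¹ • !![(β : ℂ), -b; 0, 1] - 1) = (1 / β - 1) ^ 2 + ‖b‖ ^ 2 / β ^ 2 := by
  have hβc : (β : ℂ) ≠ 0 := by exact_mod_cast hβ
  simp [frobSq_eq_entries, inv_mul_cancel₀ hβc, norm_ofReal_inv_sub_one_sq, mul_pow, sq_abs, div_eq_mul_inv,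
    add_comm, mul_comm]

lemma frobSq_lower_sub_one {β : ℝ} (hβ : β ≠ 0) (b : ℂ) :
    frobSq ((β : ℂ)⁻¹ • !![1, 0; -(starRingEnd ℂ b), (β : ℂ)] - 1) =
      (1 / β - 1) ^ 2 + ‖b‖ ^ 2 / β ^ 2 := by
  have hβc : (β : ℂ) ≠ 0 := by exact_mod_cast hβ
  simp [frobSq_eq_entries, inv_mul_cancel₀ hβc, norm_ofReal_inv_sub_one_sq, mul_pow, sq_abs, div_eq_mul_inv,
    add_comm, mul_comm]

lemma inv_sub_one_sq_add_div_sq_eq {β t : ℝ} (hβ : β ≠ 0) (h : β ^ 2 + t ^ 2 = 1) :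
    (1 / β - 1) ^ 2 + t ^ 2 / β ^ 2 = 2 * (1 - β) / β ^ 2 := by
  field_simp
  linear_combination h

lemma inv_sub_one_sq_add_div_sq_le {β t : ℝ} (hβ : 0 < β) (h : β ^ 2 + t ^ 2 = 1)
    (ht : t ^ 2 ≤ 1 / 8) : (1 / β - 1) ^ 2 + t ^ 2 / β ^ 2 ≤ (1.1 * t) ^ 2 := by
  have hβ1 : β ≤ 1 := by nlinarith
  -- `t ^ 2 = (1 - β) (1 + β)`, so the claim reduces to `2 ≤ 1.21 (1 + β) β ^ 2`,
  -- which holds since `β ≥ √(7/8) > 0.93`.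
  have hβ_ge : (0.93 : ℝ) ≤ β := by nlinarith
  have key : 2 ≤ 1.21 * (1 + β) * β ^ 2 := by nlinarith
  rw [inv_sub_one_sq_add_div_sq_eq hβ.ne' h, div_le_iff₀ (by positivity)]
  nlinarith [mul_le_mul_of_nonneg_left key (sub_nonneg.mpr hβ1)]

theorem stmt_12 (b : ℂ) (hb : ‖b‖ ≤ Real.sqrt 2 / 4) (β : ℝ)
    (hβ : β = Real.sqrt (1 - ‖b‖ ^ 2))
    (C : Matrix (Fin 2) (Fin 2) ℂ)
    (hC : C = (β : ℂ)⁻¹ • !![(β : ℂ), -b; 0, 1] ∨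
          C = (β : ℂ)⁻¹ • !![1, 0; -(starRingEnd ℂ b), (β : ℂ)]) :
    frobSq (C - 1) = (1 / β - 1) ^ 2 + ‖b‖ ^ 2 / β ^ 2 ∧
      Real.sqrt (frobSq (C - 1)) ≤ 1.1 * ‖b‖ := by
  have hb2 : ‖b‖ ^ 2 ≤ 1 / 8 := by
    calc ‖b‖ ^ 2 ≤ (Real.sqrt 2 / 4) ^ 2 := pow_le_pow_left₀ (norm_nonneg b) hb 2
      _ = 1 / 8 := by rw [div_pow, Real.sq_sqrt zero_le_two]; norm_num
  have hβ_pos : 0 < β := hβ ▸ Real.sqrt_pos.mpr (by linarith)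
  have hβb : β ^ 2 + ‖b‖ ^ 2 = 1 := by
    rw [hβ, Real.sq_sqrt (by linarith)]
    ring
  have hval : frobSq (C - 1) = (1 / β - 1) ^ 2 + ‖b‖ ^ 2 / β ^ 2 := by
    rcases hC with rfl | rfl
    exacts [frobSq_upper_sub_one hβ_pos.ne' b, frobSq_lower_sub_one hβ_pos.ne' b]
  refine ⟨hval, ?_⟩
  rw [hval, ← Real.sqrt_sq (by positivity : 0 ≤ 1.1 * ‖b‖)]
  exact Real.sqrt_le_sqrt (inv_sub_one_sq_add_div_sq_le hβ_pos hβb hb2)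
end

section
/- Let n ≥ 2 and let A be an n×n Hermitian matrix. After applying to A the N = n(n-1)/2 complex Jacobi rotations of one sweep in the column-cyclic order (1,2),(1,3),(2,3),...,(1,n),...,(n-1,n), where each rotation annihilates the current pivot element and has rotation angle φ_k with |cos φ_k| ≥ ν > 0, the resulting matrix A' satisfies S(A')^2 ≤ γ_{n,ν} S(A)^2 for a constant 0 ≤ γ_{n,ν} < 1 depending only on n and ν (not on A). -/
open Matrix

/-- Squared off-norm `S(X)²`. -/
noncomputable def offNormSq {n : ℕ} (X : Matrix (Fin n) (Fin n) ℂ) : ℝ :=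
  ∑ r : Fin n, ∑ t : Fin n, if r = t then 0 else ‖X r t‖ ^ 2

/-- The column-cyclic pivot ordering `(1,2),(1,3),(2,3),…,(1,n),…,(n-1,n)`
(with indices here starting from `0`). -/
def colCyclicPairs (n : ℕ) : List (Fin n × Fin n) :=
  (List.finRange n).flatMap fun j =>
    ((List.finRange n).filter fun i => i < j).map fun i => (i, j)

/-!
Induction on the columns. The first `m.choose 2` rotations of the sweep only involve the leading
`m × m` block. Each rotation is unitary and annihilates a Hermitian pivot pair, so it lowers `S²` of
every principal block containing its pivot by exactly `2‖a_ij‖²` and preserves the norm of every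
column segment outside the pivot plane.

Column `m` is then processed by the pivots `(0,m), …, (m-1,m)`. The `q`-th of them replaces the
entry `a_rm` (`r > q`) by `cos φ · a_rm - e^{iα} sin φ · a_rq`, where `a_rq` is still the entry at
the start of the column; hence the `r`-th pivot has modulus at least
`ν^r |a_rm| - Σ_{q<r} |a_rq|`, and the squared pivots of column `m` add up to at least
`ν^{2n}/2 · W - n · K`, where `W` is the weight of column `m` above the diagonal and `K` is `S²` of
the leading block. Either this is a fixed fraction of `W`, or `K` is comparable to `W` and the
contraction already achieved on the leading block carries over. This yields the factor `1 - κ^m` on the leading `m × m` block, with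
`κ = ν^{2n}/(8n)` (for `ν ≤ 1`).
-/

open Complex Finset

lemma Finset.sum_eq_add_add_sum_erase_erase {ι β : Type*} [DecidableEq ι] [AddCommMonoid β]
    {S : Finset ι} {i j : ι} (hij : i ≠ j) (hi : i ∈ S) (hj : j ∈ S) (f : ι → β) :
    ∑ x ∈ S, f x = f i + f j + ∑ x ∈ (S.erase i).erase j, f x := by
  rw [add_assoc, Finset.add_sum_erase _ _ (mem_erase.2 ⟨hij.symm, hj⟩), Finset.add_sum_erase _ _ hi]

lemma Finset.sum_congr_of_pair {ι β : Type*} [DecidableEq ι] [AddCommMonoid β]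
    {S : Finset ι} {i j : ι} (hij : i ≠ j) (hi : i ∈ S) (hj : j ∈ S) {f g : ι → β}
    (hpair : f i + f j = g i + g j) (hrest : ∀ t ∈ S, t ≠ i → t ≠ j → f t = g t) :
    ∑ t ∈ S, f t = ∑ t ∈ S, g t := by
  rw [sum_eq_add_add_sum_erase_erase hij hi hj, sum_eq_add_add_sum_erase_erase hij hi hj g, hpair]
  refine congrArg _ (sum_congr rfl fun t ht => ?_)
  obtain ⟨htj, ht⟩ := mem_erase.1 ht
  obtain ⟨hti, ht⟩ := mem_erase.1 ht
  exact hrest t ht hti htj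

lemma norm_sq_add_norm_sq_rotate {c s : ℝ} (hcs : c ^ 2 + s ^ 2 = 1) {u : ℂ} (hu : ‖u‖ = 1)
    (x y : ℂ) :
    ‖c * x + u * s * y‖ ^ 2 + ‖-(starRingEnd ℂ u) * s * x + c * y‖ ^ 2 = ‖x‖ ^ 2 + ‖y‖ ^ 2 := by
  have hu' : u.re ^ 2 + u.im ^ 2 = 1 := by
    have h := Complex.sq_norm u
    rw [hu, Complex.normSq_apply] at h
    linear_combination -h
  simp only [Complex.sq_norm, Complex.normSq_apply, Complex.add_re, Complex.add_im,
    Complex.mul_re, Complex.mul_im, Complex.neg_re, Complex.neg_im, Complex.conj_re,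
    Complex.conj_im, Complex.ofReal_re, Complex.ofReal_im]
  linear_combination (x.re * x.re + x.im * x.im + y.re * y.re + y.im * y.im) * hcs
    + s ^ 2 * (x.re * x.re + x.im * x.im + y.re * y.re + y.im * y.im) * hu'

lemma conj_exp_neg_mul_I (α : ℝ) : starRingEnd ℂ (cexp (-α * I)) = cexp (α * I) := by
  rw [← Complex.exp_conj, map_mul, map_neg, Complex.conj_ofReal, Complex.conj_I, neg_mul_neg]

section planeRot

variable {n : ℕ} {i j : Fin n} {φ α : ℝ}

lemma mul_planeRot_apply_left (hij : i ≠ j) (A : Matrix (Fin n) (Fin n) ℂ) (r : Fin n) :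
    (A * planeRot n i j φ α) r i = Real.cos φ * A r i + cexp (-α * I) * Real.sin φ * A r j := by
  rw [mul_apply, Fintype.sum_eq_add i j hij fun t ht => by simp [planeRot, ht.1, ht.2]]
  simp [planeRot, hij.symm]
  ring

lemma mul_planeRot_apply_right (hij : i ≠ j) (A : Matrix (Fin n) (Fin n) ℂ) (r : Fin n) :
    (A * planeRot n i j φ α) r j = -cexp (α * I) * Real.sin φ * A r i + Real.cos φ * A r j := by
  rw [mul_apply, Fintype.sum_eq_add i j hij fun t ht => by simp [planeRot, ht.1, ht.2]]
  simp [planeRot, hij.symm]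
  ring

lemma mul_planeRot_apply_of_ne (A : Matrix (Fin n) (Fin n) ℂ) {r t : Fin n} (hti : t ≠ i)
    (htj : t ≠ j) : (A * planeRot n i j φ α) r t = A r t := by
  rw [mul_apply, Fintype.sum_eq_single t fun b hb => by simp [planeRot, hti, htj, hb]]
  simp [planeRot, hti, htj]

lemma planeRot_conjTranspose_mul_apply_of_ne (A : Matrix (Fin n) (Fin n) ℂ) {r t : Fin n}
    (hri : r ≠ i) (hrj : r ≠ j) : ((planeRot n i j φ α)ᴴ * A) r t = A r t := by
  rw [mul_apply, Fintype.sum_eq_single r fun b hb => by simp [planeRot, hri, hrj, hb]]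
  simp [planeRot, hri, hrj]

lemma sum_norm_sq_mul_planeRot (hij : i ≠ j) (A : Matrix (Fin n) (Fin n) ℂ) {S : Finset (Fin n)}
    (hi : i ∈ S) (hj : j ∈ S) (r : Fin n) :
    ∑ t ∈ S, ‖(A * planeRot n i j φ α) r t‖ ^ 2 = ∑ t ∈ S, ‖A r t‖ ^ 2 := by
  refine sum_congr_of_pair hij hi hj ?_ fun t _ hti htj => by
    rw [mul_planeRot_apply_of_ne A hti htj]
  rw [mul_planeRot_apply_left hij, mul_planeRot_apply_right hij, ← conj_exp_neg_mul_I]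
  exact norm_sq_add_norm_sq_rotate (Real.cos_sq_add_sin_sq φ) (by simp [Complex.norm_exp]) _ _

lemma sum_norm_sq_planeRot_conjTranspose_mul (hij : i ≠ j) (A : Matrix (Fin n) (Fin n) ℂ)
    {S : Finset (Fin n)} (hi : i ∈ S) (hj : j ∈ S) (t : Fin n) :
    ∑ r ∈ S, ‖((planeRot n i j φ α)ᴴ * A) r t‖ ^ 2 = ∑ r ∈ S, ‖A r t‖ ^ 2 := by
  rw [← conjTranspose_conjTranspose A, ← conjTranspose_mul, conjTranspose_conjTranspose]
  simpa only [conjTranspose_apply, norm_star] using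
    sum_norm_sq_mul_planeRot hij Aᴴ hi hj t

end planeRot

noncomputable def offNormSqOn {n : ℕ} (S : Finset (Fin n)) (X : Matrix (Fin n) (Fin n) ℂ) : ℝ :=
  ∑ r ∈ S, ∑ t ∈ S, if r = t then 0 else ‖X r t‖ ^ 2

noncomputable def normSqOn {n : ℕ} (S : Finset (Fin n)) (X : Matrix (Fin n) (Fin n) ℂ) : ℝ :=
  ∑ r ∈ S, ∑ t ∈ S, ‖X r t‖ ^ 2

section offNormSqOn

variable {n : ℕ} {S : Finset (Fin n)} {X : Matrix (Fin n) (Fin n) ℂ}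

lemma offNormSqOn_univ : offNormSqOn univ X = offNormSq X := rfl

lemma offNormSqOn_nonneg : 0 ≤ offNormSqOn S X := by
  unfold offNormSqOn
  positivity

lemma offNormSqOn_eq_normSqOn_sub : offNormSqOn S X = normSqOn S X - ∑ t ∈ S, ‖X t t‖ ^ 2 := by
  rw [offNormSqOn, normSqOn, ← sum_sub_distrib]
  refine sum_congr rfl fun r hr => ?_
  rw [← add_sum_erase _ _ hr, ← add_sum_erase _ _ hr, if_pos rfl,
    sum_congr rfl fun t ht => if_neg (ne_of_mem_erase ht).symm]
  ring

lemma Matrix.IsHermitian.norm_apply_comm (hX : X.IsHermitian) (r t : Fin n) :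
    ‖X r t‖ = ‖X t r‖ := by
  rw [← hX.apply, norm_star]

lemma offNormSqOn_insert (hX : X.IsHermitian) {a : Fin n} (ha : a ∉ S) :
    offNormSqOn (insert a S) X = offNormSqOn S X + 2 * ∑ r ∈ S, ‖X r a‖ ^ 2 := by
  have hne : ∀ t ∈ S, a ≠ t := fun t ht h => ha (h ▸ ht)
  have hrow : ∑ t ∈ S, (if a = t then 0 else ‖X a t‖ ^ 2) = ∑ r ∈ S, ‖X r a‖ ^ 2 :=
    sum_congr rfl fun t ht => by rw [if_neg (hne t ht), hX.norm_apply_comm]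
  have hcol : ∀ r ∈ S, ∑ t ∈ insert a S, (if r = t then 0 else ‖X r t‖ ^ 2)
      = ‖X r a‖ ^ 2 + ∑ t ∈ S, (if r = t then 0 else ‖X r t‖ ^ 2) := fun r hr => by
    rw [sum_insert ha, if_neg (hne r hr).symm]
  rw [offNormSqOn, sum_insert ha, sum_insert ha, if_pos rfl, zero_add, hrow, sum_congr rfl hcol,
    sum_add_distrib, offNormSqOn]
  ring

end offNormSqOn

noncomputable def jacobiStep (n : ℕ) (i j : Fin n) (φ α : ℝ) (A : Matrix (Fin n) (Fin n) ℂ) :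
    Matrix (Fin n) (Fin n) ℂ :=
  (planeRot n i j φ α)ᴴ * A * planeRot n i j φ α

section jacobiStep

variable {n : ℕ} {i j : Fin n} {φ α : ℝ} {A : Matrix (Fin n) (Fin n) ℂ}

lemma Matrix.IsHermitian.jacobiStep (hA : A.IsHermitian) :
    (jacobiStep n i j φ α A).IsHermitian := by
  rw [IsHermitian, _root_.jacobiStep, conjTranspose_mul, conjTranspose_mul,
    conjTranspose_conjTranspose, hA.eq, Matrix.mul_assoc]

lemma jacobiStep_apply_of_ne {r t : Fin n} (hri : r ≠ i) (hrj : r ≠ j) (hti : t ≠ i) (htj : t ≠ j) :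
    jacobiStep n i j φ α A r t = A r t := by
  rw [jacobiStep, mul_planeRot_apply_of_ne _ hti htj,
    planeRot_conjTranspose_mul_apply_of_ne _ hri hrj]

lemma jacobiStep_apply_right_of_ne (hij : i ≠ j) {r : Fin n} (hri : r ≠ i) (hrj : r ≠ j) :
    jacobiStep n i j φ α A r j = -cexp (α * I) * Real.sin φ * A r i + Real.cos φ * A r j := by
  rw [jacobiStep, mul_planeRot_apply_right hij, planeRot_conjTranspose_mul_apply_of_ne _ hri hrj,
    planeRot_conjTranspose_mul_apply_of_ne _ hri hrj]

lemma norm_jacobiStep_apply_right_ge (hij : i ≠ j) {r : Fin n} (hri : r ≠ i) (hrj : r ≠ j) :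
    |Real.cos φ| * ‖A r j‖ - ‖A r i‖ ≤ ‖jacobiStep n i j φ α A r j‖ := by
  have hsin : ‖-cexp (α * I) * Real.sin φ * A r i‖ ≤ ‖A r i‖ := by
    rw [norm_mul, norm_mul, norm_neg, Complex.norm_exp_ofReal_mul_I, one_mul, Complex.norm_real,
      Real.norm_eq_abs]
    exact mul_le_of_le_one_left (norm_nonneg _) (Real.abs_sin_le_one φ)
  have hcos : ‖(Real.cos φ : ℂ) * A r j‖ = |Real.cos φ| * ‖A r j‖ := by
    rw [norm_mul, Complex.norm_real, Real.norm_eq_abs]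
  rw [jacobiStep_apply_right_of_ne hij hri hrj]
  have h := norm_sub_norm_le ((Real.cos φ : ℂ) * A r j) (-(-cexp (α * I) * Real.sin φ * A r i))
  rw [norm_neg, sub_neg_eq_add, add_comm, hcos] at h
  linarith

variable {S : Finset (Fin n)}

lemma normSqOn_jacobiStep (hij : i ≠ j) (hi : i ∈ S) (hj : j ∈ S) :
    normSqOn S (jacobiStep n i j φ α A) = normSqOn S A := by
  rw [normSqOn, jacobiStep, sum_congr rfl fun r _ => sum_norm_sq_mul_planeRot hij _ hi hj r,
    sum_comm, sum_congr rfl fun t _ => sum_norm_sq_planeRot_conjTranspose_mul hij _ hi hj t,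
    sum_comm, normSqOn]

lemma sum_norm_sq_jacobiStep_apply (hij : i ≠ j) (hi : i ∈ S) (hj : j ∈ S) {t : Fin n}
    (hti : t ≠ i) (htj : t ≠ j) :
    ∑ r ∈ S, ‖jacobiStep n i j φ α A r t‖ ^ 2 = ∑ r ∈ S, ‖A r t‖ ^ 2 := by
  simp only [jacobiStep, mul_planeRot_apply_of_ne _ hti htj]
  exact sum_norm_sq_planeRot_conjTranspose_mul hij A hi hj t

lemma offNormSqOn_jacobiStep (hA : A.IsHermitian) (hij : i ≠ j) (hi : i ∈ S) (hj : j ∈ S)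
    (hzero : jacobiStep n i j φ α A i j = 0) :
    offNormSqOn S (jacobiStep n i j φ α A) = offNormSqOn S A - 2 * ‖A i j‖ ^ 2 := by
  have hblock := normSqOn_jacobiStep (A := A) (φ := φ) (α := α) hij (mem_insert_self i {j})
    (mem_insert_of_mem (mem_singleton_self j))
  simp only [normSqOn, sum_pair hij] at hblock
  rw [hA.jacobiStep.norm_apply_comm j i, hzero, hA.norm_apply_comm j i, norm_zero] at hblock
  have hdiag : ∑ t ∈ S, ‖jacobiStep n i j φ α A t t‖ ^ 2
      = ∑ t ∈ S, ‖A t t‖ ^ 2 + 2 * ‖A i j‖ ^ 2 := by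
    rw [sum_eq_add_add_sum_erase_erase hij hi hj, sum_eq_add_add_sum_erase_erase hij hi hj,
      sum_congr rfl fun t ht => by
        rw [jacobiStep_apply_of_ne (ne_of_mem_erase (mem_of_mem_erase ht)) (ne_of_mem_erase ht)
          (ne_of_mem_erase (mem_of_mem_erase ht)) (ne_of_mem_erase ht)]]
    linarith
  rw [offNormSqOn_eq_normSqOn_sub, offNormSqOn_eq_normSqOn_sub, normSqOn_jacobiStep hij hi hj,
    hdiag]
  ring

end jacobiStep

def leadingIdx (n m : ℕ) : Finset (Fin n) :=
  univ.filter fun t => (t : ℕ) < m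

section leadingIdx

variable {n m : ℕ}

@[simp] lemma mem_leadingIdx {t : Fin n} : t ∈ leadingIdx n m ↔ (t : ℕ) < m := by
  simp [leadingIdx]

lemma leadingIdx_self : leadingIdx n n = univ := by
  ext t
  simp

lemma leadingIdx_succ {a : Fin n} (ha : (a : ℕ) = m) :
    leadingIdx n (m + 1) = insert a (leadingIdx n m) := by
  ext t
  simp only [mem_leadingIdx, mem_insert, Fin.ext_iff]
  omega

lemma sum_leadingIdx {M : Type*} [AddCommMonoid M] (f : ℕ → M) (hm : m ≤ n) :
    ∑ r ∈ leadingIdx n m, f r = ∑ k ∈ range m, f k := by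
  have : (leadingIdx n m).map Fin.valEmbedding = range m := by
    ext k
    simp only [mem_map, mem_leadingIdx, Fin.valEmbedding_apply, mem_range]
    exact ⟨fun ⟨t, ht, hk⟩ => hk ▸ ht, fun hk => ⟨⟨k, by omega⟩, hk, rfl⟩⟩
  rw [← this, sum_map]
  rfl

lemma offNormSqOn_leadingIdx_zero (X : Matrix (Fin n) (Fin n) ℂ) :
    offNormSqOn (leadingIdx n 0) X = 0 := by
  simp [offNormSqOn, leadingIdx]

lemma sum_sum_leadingIdx_le_offNormSqOn (X : Matrix (Fin n) (Fin n) ℂ) :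
    ∑ r ∈ leadingIdx n m, ∑ t ∈ leadingIdx n r, ‖X r t‖ ^ 2 ≤ offNormSqOn (leadingIdx n m) X := by
  refine sum_le_sum fun r hr => ?_
  rw [← sum_congr rfl fun t ht => if_neg (Fin.ne_of_lt (mem_leadingIdx.1 ht)).symm]
  refine sum_le_sum_of_subset_of_nonneg (fun t ht => ?_) fun t _ _ => by positivity
  simp only [mem_leadingIdx] at ht hr ⊢
  omega

end leadingIdx

lemma sq_div_two_sub_sq_le {p a b : ℝ} (ha : 0 ≤ a) (h : a - b ≤ p) :
    a ^ 2 / 2 - b ^ 2 ≤ p ^ 2 := by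
  nlinarith [sq_nonneg (p - b)]

def IsJacobiRun {n : ℕ} (p : ℕ → Fin n × Fin n) (φ α : ℕ → ℝ)
    (A : ℕ → Matrix (Fin n) (Fin n) ℂ) (N : ℕ) : Prop :=
  ∀ k < N, A (k + 1) = jacobiStep n (p k).1 (p k).2 (φ k) (α k) (A k) ∧
    A (k + 1) (p k).1 (p k).2 = 0

namespace IsJacobiRun

variable {n N : ℕ} {p : ℕ → Fin n × Fin n} {φ α : ℕ → ℝ} {A : ℕ → Matrix (Fin n) (Fin n) ℂ}

lemma mono (hA : IsJacobiRun p φ α A N) {M : ℕ} (hMN : M ≤ N) : IsJacobiRun p φ α A M :=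
  fun k hk => hA k (by omega)

lemma shift {T : ℕ} (hA : IsJacobiRun p φ α A (T + N)) :
    IsJacobiRun (fun k => p (T + k)) (fun k => φ (T + k)) (fun k => α (T + k))
      (fun k => A (T + k)) N :=
  fun k hk => hA (T + k) (by omega)

lemma isHermitian (hA : IsJacobiRun p φ α A N) (h0 : (A 0).IsHermitian) :
    ∀ k ≤ N, (A k).IsHermitian
  | 0, _ => h0
  | k + 1, hk => (hA k hk).1 ▸ (hA.isHermitian h0 k (by omega)).jacobiStep

lemma apply_eq (hA : IsJacobiRun p φ α A N) {r t : Fin n}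
    (hr : ∀ k < N, r ≠ (p k).1 ∧ r ≠ (p k).2) (ht : ∀ k < N, t ≠ (p k).1 ∧ t ≠ (p k).2) :
    A N r t = A 0 r t := by
  induction N with
  | zero => rfl
  | succ N ih =>
    obtain ⟨hri, hrj⟩ := hr N (by omega)
    obtain ⟨hti, htj⟩ := ht N (by omega)
    rw [(hA N (by omega)).1, jacobiStep_apply_of_ne hri hrj hti htj,
      ih (hA.mono (by omega)) (fun k hk => hr k (by omega)) fun k hk => ht k (by omega)]

variable {S : Finset (Fin n)}

lemma sum_norm_sq_apply_eq (hA : IsJacobiRun p φ α A N)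
    (hp : ∀ k < N, (p k).1 ≠ (p k).2 ∧ (p k).1 ∈ S ∧ (p k).2 ∈ S) {t : Fin n} (ht : t ∉ S) :
    ∑ r ∈ S, ‖A N r t‖ ^ 2 = ∑ r ∈ S, ‖A 0 r t‖ ^ 2 := by
  induction N with
  | zero => rfl
  | succ N ih =>
    obtain ⟨hij, hi, hj⟩ := hp N (by omega)
    rw [(hA N (by omega)).1, sum_norm_sq_jacobiStep_apply hij hi hj
      (ne_of_mem_of_not_mem hi ht).symm (ne_of_mem_of_not_mem hj ht).symm,
      ih (hA.mono (by omega)) fun k hk => hp k (by omega)]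

lemma offNormSqOn_eq (hA : IsJacobiRun p φ α A N) (h0 : (A 0).IsHermitian)
    (hp : ∀ k < N, (p k).1 ≠ (p k).2 ∧ (p k).1 ∈ S ∧ (p k).2 ∈ S) :
    offNormSqOn S (A N) = offNormSqOn S (A 0) - 2 * ∑ k ∈ range N, ‖A k (p k).1 (p k).2‖ ^ 2 := by
  induction N with
  | zero => simp
  | succ N ih =>
    obtain ⟨hij, hi, hj⟩ := hp N (by omega)
    obtain ⟨hstep, hzero⟩ := hA N (by omega)
    rw [hstep, offNormSqOn_jacobiStep (hA.isHermitian h0 N (by omega)) hij hi hj (hstep ▸ hzero),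
      ih (hA.mono (by omega)) fun k hk => hp k (by omega), sum_range_succ]
    ring

lemma norm_apply_ge_of_column {j : Fin n} (hA : IsJacobiRun p φ α A N)
    (hp : ∀ k < N, ((p k).1 : ℕ) = k ∧ (p k).2 = j) {ν : ℝ} (hν0 : 0 ≤ ν)
    (hν1 : ν ≤ 1) (hcos : ∀ k < N, ν ≤ |Real.cos (φ k)|) {r : Fin n} (hr : (r : ℕ) < j) :
    ∀ q ≤ N, q ≤ r → ν ^ q * ‖A 0 r j‖ - ∑ t ∈ leadingIdx n q, ‖A 0 r t‖ ≤ ‖A q r j‖ := by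
  intro q
  induction q with
  | zero => intro _ _; simp [leadingIdx]
  | succ q ih =>
    intro hqN hqr
    obtain ⟨hpq, hpj⟩ := hp q (by omega)
    have hrj : r ≠ j := Fin.ne_of_lt hr
    have hri : r ≠ (p q).1 := Fin.ne_of_val_ne (by omega)
    have hij : (p q).1 ≠ j := Fin.ne_of_val_ne (by omega)
    have huntouched : ∀ s : Fin n, q ≤ s → s ≠ j → ∀ k < q, s ≠ (p k).1 ∧ s ≠ (p k).2 :=
      fun s hqs hsj k hk => by
        rw [(hp k (by omega)).2]
        exact ⟨Fin.ne_of_val_ne (by rw [(hp k (by omega)).1]; omega), hsj⟩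
    have hpivot : A q r (p q).1 = A 0 r (p q).1 :=
      (hA.mono (by omega)).apply_eq (huntouched r (by omega) hrj) (huntouched _ hpq.ge hij)
    have hstep : |Real.cos (φ q)| * ‖A q r j‖ - ‖A 0 r (p q).1‖ ≤ ‖A (q + 1) r j‖ := by
      rw [(hA q (by omega)).1, ← hpivot, hpj]
      exact norm_jacobiStep_apply_right_ge hij hri hrj
    have hsum : ∑ t ∈ leadingIdx n (q + 1), ‖A 0 r t‖
        = ‖A 0 r (p q).1‖ + ∑ t ∈ leadingIdx n q, ‖A 0 r t‖ := by
      rw [leadingIdx_succ hpq, sum_insert (by simp [hpq])]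
    have he : 0 ≤ ∑ t ∈ leadingIdx n q, ‖A 0 r t‖ := by positivity
    have ih' := ih (by omega) (by omega)
    rw [hsum, pow_succ]
    nlinarith [mul_le_mul_of_nonneg_right (hcos q (by omega)) (norm_nonneg (A q r j)),
      mul_le_mul_of_nonneg_left ih' hν0, mul_le_of_le_one_left he hν1]

lemma sum_norm_sq_pivot_ge_of_column {j : Fin n} (hA : IsJacobiRun p φ α A j)
    (hp : ∀ k < (j : ℕ), ((p k).1 : ℕ) = k ∧ (p k).2 = j) {ν : ℝ} (hν0 : 0 ≤ ν) (hν1 : ν ≤ 1)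
    (hcos : ∀ k < (j : ℕ), ν ≤ |Real.cos (φ k)|) :
    (ν ^ n) ^ 2 / 2 * ∑ r ∈ leadingIdx n j, ‖A 0 r j‖ ^ 2
        - n * offNormSqOn (leadingIdx n j) (A 0)
      ≤ ∑ k ∈ range j, ‖A k (p k).1 (p k).2‖ ^ 2 := by
  have hpivot : ∀ r ∈ leadingIdx n j, (ν ^ n) ^ 2 / 2 * ‖A 0 r j‖ ^ 2
      - n * ∑ t ∈ leadingIdx n r, ‖A 0 r t‖ ^ 2 ≤ ‖A r r j‖ ^ 2 := by
    intro r hr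
    have hr : (r : ℕ) < j := mem_leadingIdx.1 hr
    have hlow : ν ^ n * ‖A 0 r j‖ - ∑ t ∈ leadingIdx n r, ‖A 0 r t‖ ≤ ‖A r r j‖ :=
      le_trans (sub_le_sub_right (mul_le_mul_of_nonneg_right
        (pow_le_pow_of_le_one hν0 hν1 r.isLt.le) (norm_nonneg _)) _)
        (hA.norm_apply_ge_of_column hp hν0 hν1 hcos hr r hr.le le_rfl)
    have hcs : (∑ t ∈ leadingIdx n r, ‖A 0 r t‖) ^ 2 ≤ n * ∑ t ∈ leadingIdx n r, ‖A 0 r t‖ ^ 2 :=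
      sq_sum_le_card_mul_sum_sq.trans (by
        gcongr
        exact_mod_cast (card_le_univ _).trans (Fintype.card_fin n).le)
    have := sq_div_two_sub_sq_le (by positivity) hlow
    rw [mul_pow] at this
    linarith
  calc (ν ^ n) ^ 2 / 2 * ∑ r ∈ leadingIdx n j, ‖A 0 r j‖ ^ 2
        - n * offNormSqOn (leadingIdx n j) (A 0)
      ≤ ∑ r ∈ leadingIdx n j, ((ν ^ n) ^ 2 / 2 * ‖A 0 r j‖ ^ 2
          - n * ∑ t ∈ leadingIdx n r, ‖A 0 r t‖ ^ 2) := by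
        rw [sum_sub_distrib, ← mul_sum, ← mul_sum]
        gcongr
        exact sum_sum_leadingIdx_le_offNormSqOn _
    _ ≤ ∑ r ∈ leadingIdx n j, ‖A r r j‖ ^ 2 := sum_le_sum hpivot
    _ = ∑ k ∈ range j, ‖A k (p k).1 (p k).2‖ ^ 2 := by
        rw [← sum_leadingIdx _ j.isLt.le]
        refine sum_congr rfl fun r hr => ?_
        obtain ⟨h1, h2⟩ := hp r (mem_leadingIdx.1 hr)
        rw [h2, show (p r).1 = r from Fin.ext h1]

end IsJacobiRun

lemma List.filter_lt_range {m n : ℕ} (h : m ≤ n) :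
    (List.range n).filter (· < m) = List.range m := by
  obtain ⟨k, rfl⟩ := Nat.exists_eq_add_of_le h
  rw [List.range_add, List.filter_append, List.filter_eq_self.2 (by simp),
    List.filter_eq_nil_iff.2 (by simp), List.append_nil]

lemma List.map_val_finRange_filter_lt {n : ℕ} (j : Fin n) :
    ((List.finRange n).filter (· < j)).map Fin.val = List.range j := by
  rw [← List.filter_lt_range j.isLt.le, ← List.map_coe_finRange_eq_range, List.filter_map]
  rfl

def colCyclicIdx (n : ℕ) : List (ℕ × ℕ) :=
  (List.range n).flatMap fun j => (List.range j).map fun i => (i, j)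

lemma map_val_colCyclicPairs (n : ℕ) :
    (colCyclicPairs n).map (fun q => ((q.1 : ℕ), (q.2 : ℕ))) = colCyclicIdx n := by
  rw [colCyclicPairs, colCyclicIdx, List.map_flatMap, ← List.map_coe_finRange_eq_range,
    List.flatMap_map]
  refine List.flatMap_congr fun j _ => ?_
  rw [← List.map_val_finRange_filter_lt, List.map_map, List.map_map]
  rfl

lemma Nat.succ_choose_two (m : ℕ) : (m + 1).choose 2 = m.choose 2 + m := by
  rw [Nat.choose_succ_succ', Nat.choose_one_right, add_comm]

lemma colCyclicIdx_succ (m : ℕ) :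
    colCyclicIdx (m + 1) = colCyclicIdx m ++ (List.range m).map fun i => (i, m) := by
  simp [colCyclicIdx, List.range_succ, List.flatMap_append]

lemma length_colCyclicIdx (m : ℕ) : (colCyclicIdx m).length = m.choose 2 := by
  induction m with
  | zero => rfl
  | succ m ih =>
    rw [colCyclicIdx_succ, List.length_append, ih, List.length_map, List.length_range,
      Nat.succ_choose_two]

lemma mem_colCyclicIdx {m i j : ℕ} : (i, j) ∈ colCyclicIdx m ↔ i < j ∧ j < m := by
  simp only [colCyclicIdx, List.mem_flatMap, List.mem_range, List.mem_map, Prod.mk.injEq]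
  constructor
  · rintro ⟨j', hj', i', hi', rfl, rfl⟩
    exact ⟨hi', hj'⟩
  · rintro ⟨hij, hjm⟩
    exact ⟨j, hjm, i, hij, rfl, rfl⟩

lemma length_colCyclicPairs (n : ℕ) : (colCyclicPairs n).length = n.choose 2 := by
  rw [← List.length_map (fun q : Fin n × Fin n => ((q.1 : ℕ), (q.2 : ℕ))),
    map_val_colCyclicPairs, length_colCyclicIdx]

lemma colCyclicIdx_prefix {m n : ℕ} (h : m ≤ n) : colCyclicIdx m <+: colCyclicIdx n := by
  induction h with
  | refl => exact List.prefix_refl _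
  | step _ ih => exact ih.trans (colCyclicIdx_succ _ ▸ List.prefix_append _ _)

lemma colCyclicIdx_getElem?_of_lt {m n k : ℕ} (hmn : m ≤ n) (hk : k < m.choose 2) :
    ∃ i j, (colCyclicIdx n)[k]? = some (i, j) ∧ i < j ∧ j < m := by
  obtain ⟨l, hl⟩ := colCyclicIdx_prefix hmn
  have hk' : k < (colCyclicIdx m).length := (length_colCyclicIdx m).symm ▸ hk
  refine ⟨(colCyclicIdx m)[k].1, (colCyclicIdx m)[k].2, ?_,
    mem_colCyclicIdx.1 (List.getElem_mem hk')⟩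
  rw [← hl, List.getElem?_append_left hk', List.getElem?_eq_getElem hk']

lemma colCyclicIdx_getElem?_choose_add {i m n : ℕ} (him : i < m) (hmn : m < n) :
    (colCyclicIdx n)[m.choose 2 + i]? = some (i, m) := by
  obtain ⟨l, hl⟩ := colCyclicIdx_prefix hmn
  rw [← hl, colCyclicIdx_succ, List.append_assoc, List.getElem?_append_right
    ((length_colCyclicIdx m).trans_le (Nat.le_add_right _ i)), length_colCyclicIdx,
    Nat.add_sub_cancel_left, List.getElem?_append_left (by simpa using him)]
  simp [him]

def IsColCyclic {n : ℕ} (p : ℕ → Fin n × Fin n) : Prop :=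
  ∀ k < n.choose 2, (colCyclicIdx n)[k]? = some (((p k).1 : ℕ), ((p k).2 : ℕ))

namespace IsColCyclic

variable {n : ℕ} {p : ℕ → Fin n × Fin n}

lemma lt (hp : IsColCyclic p) {m k : ℕ} (hmn : m ≤ n) (hk : k < m.choose 2) :
    ((p k).1 : ℕ) < (p k).2 ∧ ((p k).2 : ℕ) < m := by
  obtain ⟨i, j, h, hij, hjm⟩ := colCyclicIdx_getElem?_of_lt hmn hk
  rw [hp k (hk.trans_le (Nat.choose_le_choose 2 hmn)), Option.some.injEq, Prod.mk.injEq] at h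
  rw [h.1, h.2]
  exact ⟨hij, hjm⟩

lemma apply_choose_add (hp : IsColCyclic p) {i m : ℕ} (him : i < m) (hmn : m < n) :
    ((p (m.choose 2 + i)).1 : ℕ) = i ∧ ((p (m.choose 2 + i)).2 : ℕ) = m := by
  have hlt : m.choose 2 + i < n.choose 2 := by
    refine lt_of_lt_of_le ?_ (Nat.choose_le_choose 2 hmn)
    rw [Nat.succ_choose_two]
    omega
  have h := colCyclicIdx_getElem?_choose_add him hmn
  rw [hp _ hlt, Option.some.injEq, Prod.mk.injEq] at h
  exact h

end IsColCyclic

noncomputable def jacobiSweepRate (n : ℕ) (ν : ℝ) : ℝ := (ν ^ n) ^ 2 / (8 * n)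

lemma jacobiSweepRate_pos {n : ℕ} (hn : 0 < n) {ν : ℝ} (hν : 0 < ν) : 0 < jacobiSweepRate n ν := by
  unfold jacobiSweepRate
  positivity

lemma jacobiSweepRate_le_half {n : ℕ} {ν : ℝ} (hν0 : 0 ≤ ν) (hν1 : ν ≤ 1) :
    jacobiSweepRate n ν ≤ 1 / 2 := by
  rcases Nat.eq_zero_or_pos n with rfl | hn
  · simp [jacobiSweepRate]
  have hνn : (ν ^ n) ^ 2 ≤ 1 := pow_le_one₀ (by positivity) (pow_le_one₀ hν0 hν1)
  have hn' : (1 : ℝ) ≤ n := by exact_mod_cast hn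
  rw [jacobiSweepRate, div_le_iff₀ (by positivity)]
  linarith

/-- `B` and `K` are `S²` of the leading block before and after its own rotations, `W` is the
weight of the next column above the diagonal and `D` the sum of its squared pivots. -/
lemma column_contraction {K B W D d κ c : ℝ} (hκ : κ ≤ 1 / 2) (hd0 : 0 ≤ d) (hd1 : d ≤ 1)
    (hc : 1 ≤ c) (hB : 0 ≤ B) (hK : K ≤ (1 - d) * B) (hD0 : 0 ≤ D)
    (hD : c * (4 * κ * W - K) ≤ D) :
    K + 2 * W - 2 * D ≤ (1 - d * κ) * (B + 2 * W) := by
  have hD' : d * (4 * κ * W - K) ≤ 4 * D := by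
    rcases le_total (4 * κ * W - K) 0 with h | h
    · nlinarith
    · nlinarith
  nlinarith [mul_le_mul_of_nonneg_left hK (by linarith : (0 : ℝ) ≤ 1 + d / 2),
    mul_nonneg (mul_nonneg hd0 (by linarith : (0 : ℝ) ≤ 1 / 2 - κ)) hB, mul_nonneg (sq_nonneg d) hB]

namespace IsJacobiRun

variable {n : ℕ} {p : ℕ → Fin n × Fin n} {φ α : ℕ → ℝ} {A : ℕ → Matrix (Fin n) (Fin n) ℂ}
  {ν : ℝ}

lemma offNormSqOn_leadingIdx_succ_le (hA : IsJacobiRun p φ α A (n.choose 2))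
    (hp : IsColCyclic p) (h0 : (A 0).IsHermitian) (hν0 : 0 ≤ ν) (hν1 : ν ≤ 1)
    (hcos : ∀ k < n.choose 2, ν ≤ |Real.cos (φ k)|) {m : ℕ} (hm : m < n) {d : ℝ} (hd0 : 0 ≤ d)
    (hd1 : d ≤ 1)
    (hprev : offNormSqOn (leadingIdx n m) (A (m.choose 2))
      ≤ (1 - d) * offNormSqOn (leadingIdx n m) (A 0)) :
    offNormSqOn (leadingIdx n (m + 1)) (A ((m + 1).choose 2))
      ≤ (1 - d * jacobiSweepRate n ν) * offNormSqOn (leadingIdx n (m + 1)) (A 0) := by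
  set T := m.choose 2
  set j : Fin n := ⟨m, hm⟩
  have hTn : T + m ≤ n.choose 2 := Nat.succ_choose_two m ▸ Nat.choose_le_choose 2 hm
  have hj : j ∉ leadingIdx n m := by simp [j]
  have hins : leadingIdx n (m + 1) = insert j (leadingIdx n m) := leadingIdx_succ rfl
  have hcol : ∀ k < m, ((p (T + k)).1 : ℕ) = k ∧ (p (T + k)).2 = j := fun k hk =>
    ⟨(hp.apply_choose_add hk hm).1, Fin.ext (hp.apply_choose_add hk hm).2⟩
  have hcolumn := (hA.mono hTn).shift (T := T)
  have hHT : (A T).IsHermitian := hA.isHermitian h0 T (by omega)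
  have hW : ∑ r ∈ leadingIdx n m, ‖A T r j‖ ^ 2 = ∑ r ∈ leadingIdx n m, ‖A 0 r j‖ ^ 2 := by
    refine (hA.mono (by omega)).sum_norm_sq_apply_eq (fun k hk => ?_) hj
    obtain ⟨h1, h2⟩ := hp.lt hm.le hk
    exact ⟨Fin.ne_of_lt h1, mem_leadingIdx.2 (h1.trans h2), mem_leadingIdx.2 h2⟩
  have hdrop := hcolumn.offNormSqOn_eq hHT (S := leadingIdx n (m + 1)) fun k hk => by
    obtain ⟨h1, h2⟩ := hcol k hk
    refine ⟨Fin.ne_of_val_ne (by rw [h1, h2]; exact hk.ne), ?_, ?_⟩ <;>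
      simp only [mem_leadingIdx, h1, h2, j] <;> omega
  have hD := hcolumn.sum_norm_sq_pivot_ge_of_column (j := j) hcol hν0 hν1
    fun k (hk : k < m) => hcos (T + k) (by omega)
  simp only [add_zero] at hdrop hD
  rw [Nat.succ_choose_two, hdrop, hins, offNormSqOn_insert hHT hj, offNormSqOn_insert h0 hj, hW]
  rw [hW] at hD
  have hn : (n : ℝ) ≠ 0 := by exact_mod_cast hm.pos.ne'
  refine column_contraction (jacobiSweepRate_le_half hν0 hν1) hd0 hd1 (c := n)
    (by exact_mod_cast hm.pos) offNormSqOn_nonneg hprev (by positivity) ?_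
  rw [jacobiSweepRate]
  convert hD using 1
  field_simp
  ring

theorem offNormSqOn_leadingIdx_le (hA : IsJacobiRun p φ α A (n.choose 2))
    (hp : IsColCyclic p) (h0 : (A 0).IsHermitian) (hν0 : 0 ≤ ν) (hν1 : ν ≤ 1)
    (hcos : ∀ k < n.choose 2, ν ≤ |Real.cos (φ k)|) :
    ∀ m ≤ n, offNormSqOn (leadingIdx n m) (A (m.choose 2))
      ≤ (1 - jacobiSweepRate n ν ^ m) * offNormSqOn (leadingIdx n m) (A 0)
  | 0, _ => by simp [offNormSqOn_leadingIdx_zero]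
  | m + 1, hm => by
    have hκ0 : 0 ≤ jacobiSweepRate n ν := by
      unfold jacobiSweepRate
      positivity
    have hκ1 : jacobiSweepRate n ν ≤ 1 := (jacobiSweepRate_le_half hν0 hν1).trans (by norm_num)
    rw [pow_succ]
    exact hA.offNormSqOn_leadingIdx_succ_le hp h0 hν0 hν1 hcos hm (pow_nonneg hκ0 m)
      (pow_le_one₀ hκ0 hκ1) (hA.offNormSqOn_leadingIdx_le hp h0 hν0 hν1 hcos m (by omega))

end IsJacobiRun

theorem stmt_14 (n : ℕ) (hn : 2 ≤ n) (ν : ℝ) (hν : 0 < ν) :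
    ∃ γ : ℝ, 0 ≤ γ ∧ γ < 1 ∧
      ∀ (A : ℕ → Matrix (Fin n) (Fin n) ℂ) (φ α : ℕ → ℝ),
        (A 0).IsHermitian →
        (∀ k (hk : k < (colCyclicPairs n).length), ν ≤ |Real.cos (φ k)|) →
        (∀ k (hk : k < (colCyclicPairs n).length),
          A (k + 1) =
            (planeRot n ((colCyclicPairs n).get ⟨k, hk⟩).1 ((colCyclicPairs n).get ⟨k, hk⟩).2
                (φ k) (α k))ᴴ *
              A k *
              planeRot n ((colCyclicPairs n).get ⟨k, hk⟩).1 ((colCyclicPairs n).get ⟨k, hk⟩).2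
                (φ k) (α k)) →
        (∀ k (hk : k < (colCyclicPairs n).length),
          A (k + 1) ((colCyclicPairs n).get ⟨k, hk⟩).1 ((colCyclicPairs n).get ⟨k, hk⟩).2 = 0) →
        offNormSq (A (colCyclicPairs n).length) ≤ γ * offNormSq (A 0) := by
  have hν' : 0 < min ν 1 := lt_min hν one_pos
  have hκ := jacobiSweepRate_pos (by omega : 0 < n) hν'
  refine ⟨1 - jacobiSweepRate n (min ν 1) ^ n, ?_, by linarith [pow_pos hκ n], ?_⟩
  · linarith [pow_le_one₀ hκ.le ((jacobiSweepRate_le_half hν'.le (min_le_right ν 1)).trans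
      (by norm_num : (1 : ℝ) / 2 ≤ 1)) (n := n)]
  intro A φ α h0 hcos hstep hzero
  have hlen := length_colCyclicPairs n
  set p : ℕ → Fin n × Fin n := fun k => (colCyclicPairs n).getD k (⟨0, by omega⟩, ⟨0, by omega⟩)
  have hpk : ∀ k (hk : k < (colCyclicPairs n).length), p k = (colCyclicPairs n).get ⟨k, hk⟩ :=
    fun k hk => List.getD_eq_getElem _ _ hk
  have hrun : IsJacobiRun p φ α A (n.choose 2) := fun k hk => by
    rw [hpk k (hlen ▸ hk)]
    exact ⟨hstep k _, hzero k _⟩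
  have hp : IsColCyclic p := fun k hk => by
    rw [← map_val_colCyclicPairs, List.getElem?_map, List.getElem?_eq_getElem (hlen ▸ hk),
      hpk k (hlen ▸ hk)]
    rfl
  have := hrun.offNormSqOn_leadingIdx_le hp h0 hν'.le (min_le_right ν 1)
    (fun k hk => (min_le_left ν 1).trans (hcos k (hlen ▸ hk))) n le_rfl
  rwa [leadingIdx_self, offNormSqOn_univ, offNormSqOn_univ, ← hlen] at this
end
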